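/- (Upper bound of γ.) Let S = 2^{-n/2} Σ_α c_α Q_α with c_α ∈ ℂ and Σ_α |c_α|² = 1, let γ > 0, and let ρ be a (1+n)-qubit density matrix (positive semidefinite with trace 1) whose upper-right block (⟨0|⊗I)ρ(|1⟩⊗I) equals γS. Then γ · Σ_β |d_β| ≤ 1/2, where d_β = 2^{-n/2} Σ_α (−1)^{α·β} c_α is the Hadamard transform of the coefficient vector (c_α). Equivalently, γ ≤ 1/(2 Σ_β |⟨β| H^{⊗n} |ψ_S⟩|) where |ψ_S⟩ = Σ_α c_α |α⟩. -/

import Mathlib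

open Matrix Kronecker BigOperators
open scoped ComplexOrder

/-- Bitstrings of length `n`. -/
abbrev BV (n : ℕ) : Type := Fin n → ZMod 2

/-- Single-qubit basis index. -/
abbrev Q2 : Type := ZMod 2

/-- The Pauli X-string `Q_α`: `(Q_α)_{ij} = 1` iff `j = i ⊕ α`. -/
def Qx {n : ℕ} (α : BV n) : Matrix (BV n) (BV n) ℂ :=
  Matrix.of fun i j => if j = i + α then 1 else 0

/-- The upper-right block `(⟨0|⊗I) ρ (|1⟩⊗I)` of a `(1+n)`-qubit matrix. -/
def upperRight {n : ℕ} (ρ : Matrix (Q2 × BV n) (Q2 × BV n) ℂ) :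
    Matrix (BV n) (BV n) ℂ :=
  Matrix.of fun i j => ρ (0, i) (1, j)

/-!
Conjugation by `1 ⊗ H^{⊗n}` preserves positivity and trace, and since `H^{⊗n}` diagonalises
every X-string, `H^{⊗n} Q_α H^{⊗n} = diag_β (-1)^{α·β}`, it turns the upper-right block `γS` into
`γ · diag_β d_β`. An off-diagonal entry of a positive semidefinite matrix is bounded by the mean
of the two corresponding diagonal entries, so `|γ d_β| ≤ (σ_{(0,β),(0,β)} + σ_{(1,β),(1,β)}) / 2`
for the conjugated state `σ`, and summing over `β` gives `|γ| ∑_β |d_β| ≤ tr σ / 2 = 1 / 2`.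
-/

theorem Matrix.PosSemidef.norm_apply_le {m 𝕜 : Type*} [Fintype m] [RCLike 𝕜]
    {M : Matrix m m 𝕜} (hM : M.PosSemidef) (i j : m) :
    ‖M i j‖ ≤ (RCLike.re (M i i) + RCLike.re (M j j)) / 2 := by
  obtain ⟨k, v, rfl⟩ := posSemidef_iff_eq_sum_vecMulVec.mp hM
  have hdiag : ∀ i, RCLike.re ((∑ l, vecMulVec (v l) (star (v l))) i i) = ∑ l, ‖v l i‖ ^ 2 := by
    intro i
    simp [Matrix.sum_apply, vecMulVec_apply, RCLike.mul_conj]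
  rw [hdiag, hdiag, ← Finset.sum_add_distrib, Finset.sum_div, Matrix.sum_apply]
  refine (norm_sum_le _ _).trans (Finset.sum_le_sum fun l _ => ?_)
  rw [vecMulVec_apply, norm_mul, Pi.star_apply, norm_star]
  nlinarith [sq_nonneg (‖v l i‖ - ‖v l j‖)]

lemma neg_one_pow_val_add (x y : ZMod 2) :
    (-1 : ℂ) ^ (x + y).val = (-1) ^ x.val * (-1) ^ y.val := by
  rw [ZMod.val_add, ← neg_one_pow_eq_pow_mod_two, pow_add]

def walsh {n : ℕ} (α β : BV n) : ℂ := (-1) ^ (α ⬝ᵥ β).val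

section Walsh

variable {n : ℕ}

lemma walsh_comm (α β : BV n) : walsh α β = walsh β α := by
  rw [walsh, walsh, dotProduct_comm]

lemma walsh_add_left (α α' β : BV n) : walsh (α + α') β = walsh α β * walsh α' β := by
  rw [walsh, add_dotProduct, neg_one_pow_val_add, walsh, walsh]

lemma walsh_add_right (α β β' : BV n) : walsh α (β + β') = walsh α β * walsh α β' := by
  rw [walsh_comm, walsh_add_left, walsh_comm β, walsh_comm β']

lemma walsh_zero_left (β : BV n) : walsh 0 β = 1 := by
  simp [walsh]

lemma star_walsh (α β : BV n) : star (walsh α β) = walsh α β := by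
  simp [walsh]

lemma sum_walsh (α : BV n) : ∑ β, walsh α β = if α = 0 then 2 ^ n else 0 := by
  split_ifs with hα
  · simp [hα, walsh_zero_left]
  · obtain ⟨k, hk⟩ : ∃ k, α k ≠ 0 := Function.ne_iff.mp hα
    have hflip : walsh α (Pi.single k 1) = -1 := by
      have : α k = 1 := by revert hk; generalize α k = a; decide +revert
      simp [walsh, dotProduct_single, this, ZMod.val_one]
    -- translating by a vector on which `walsh α` is `-1` negates the sum
    have hneg := Equiv.sum_comp (Equiv.addRight (Pi.single k 1 : BV n)) (walsh α)
    simp only [Equiv.coe_addRight, walsh_add_right, hflip, mul_neg_one,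
      Finset.sum_neg_distrib] at hneg
    linear_combination -hneg / 2

lemma BV.add_eq_zero_iff {i j : BV n} : i + j = 0 ↔ i = j := by
  rw [add_eq_zero_iff_eq_neg, show -j = j from funext fun k => ZMod.neg_eq_self_mod_two (j k)]

end Walsh

noncomputable def walshHadamard (n : ℕ) : Matrix (BV n) (BV n) ℂ :=
  (Real.sqrt 2 : ℂ)⁻¹ ^ n • Matrix.of walsh

section WalshHadamard

variable {n : ℕ}

lemma walshHadamard_conjTranspose : (walshHadamard n)ᴴ = walshHadamard n := by
  ext i j
  simp [walshHadamard, star_walsh, walsh_comm i j]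

lemma walshHadamard_mul_self : walshHadamard n * walshHadamard n = 1 := by
  have hnorm : (Real.sqrt 2 : ℂ)⁻¹ ^ n * (Real.sqrt 2 : ℂ)⁻¹ ^ n * 2 ^ n = 1 := by
    rw [← mul_pow, ← mul_pow, ← mul_inv, ← Complex.ofReal_mul,
      Real.mul_self_sqrt zero_le_two]
    norm_num
  ext i j
  have hrow : ∑ k, walsh i k * walsh k j = ∑ k, walsh (i + j) k :=
    Finset.sum_congr rfl fun k _ => by rw [walsh_comm k j, walsh_add_left]
  rw [walshHadamard, smul_mul_smul_comm, Matrix.smul_apply, mul_apply]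
  simp only [of_apply, hrow, sum_walsh, BV.add_eq_zero_iff, one_apply, smul_eq_mul]
  split_ifs
  · exact hnorm
  · exact mul_zero _

lemma Qx_mul_walshHadamard (α : BV n) :
    Qx α * walshHadamard n = walshHadamard n * diagonal (walsh α) := by
  ext i j
  rw [mul_diagonal, mul_apply]
  simp [Qx, walshHadamard, walsh_add_left, mul_assoc]

lemma walshHadamard_mul_Qx_mul_walshHadamard (α : BV n) :
    walshHadamard n * Qx α * walshHadamard n = diagonal (walsh α) := by
  rw [mul_assoc, Qx_mul_walshHadamard, ← mul_assoc, walshHadamard_mul_self, one_mul]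

lemma walshHadamard_mul_sum_Qx_mul_walshHadamard (c : BV n → ℂ) :
    walshHadamard n * (∑ α, c α • Qx α) * walshHadamard n
      = diagonal fun β => ∑ α, walsh α β * c α := by
  simp only [Matrix.mul_sum, Matrix.sum_mul, Matrix.mul_smul, Matrix.smul_mul,
    walshHadamard_mul_Qx_mul_walshHadamard]
  ext i j
  by_cases h : i = j
  · simp [h, Matrix.sum_apply, mul_comm]
  · simp [h, Matrix.sum_apply]

end WalshHadamard

lemma trace_eq_sum_zmod_two_prod {m R : Type*} [Fintype m] [AddCommMonoid R]
    (M : Matrix (ZMod 2 × m) (ZMod 2 × m) R) :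
    M.trace = ∑ i, (M (0, i) (0, i) + M (1, i) (1, i)) := by
  rw [trace, Fintype.sum_prod_type, Finset.sum_add_distrib]
  exact Fin.sum_univ_two fun a => ∑ i, M (a, i) (a, i)

lemma upperRight_one_kronecker_mul_mul {n : ℕ} (A B : Matrix (BV n) (BV n) ℂ)
    (ρ : Matrix (Q2 × BV n) (Q2 × BV n) ℂ) :
    upperRight ((1 ⊗ₖ A) * ρ * (1 ⊗ₖ B)) = A * upperRight ρ * B := by
  ext i j
  simp [upperRight, mul_apply, kroneckerMap_apply, one_apply, Fintype.sum_prod_type,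
    Finset.sum_mul]

theorem gamma_upper_bound {n : ℕ} (c : BV n → ℂ)
    (γ : ℝ)
    (ρ : Matrix (Q2 × BV n) (Q2 × BV n) ℂ)
    (hpsd : ρ.PosSemidef) (htr : ρ.trace = 1)
    (hblock : upperRight ρ
      = (γ : ℂ) • ((Real.sqrt 2 : ℂ)⁻¹ ^ n • ∑ α, c α • Qx α)) :
    γ * ∑ β : BV n, ‖
        ((Real.sqrt 2 : ℂ)⁻¹ ^ n *
          ∑ α, (-1 : ℂ) ^ (∑ k, α k * β k : ZMod 2).val * c α)‖ ≤ 1 / 2 := by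
  let d : BV n → ℂ := fun β => (Real.sqrt 2 : ℂ)⁻¹ ^ n * ∑ α, walsh α β * c α
  change γ * ∑ β, ‖d β‖ ≤ 1 / 2
  let U : Matrix (Q2 × BV n) (Q2 × BV n) ℂ := 1 ⊗ₖ walshHadamard n
  have hU : Uᴴ = U := by
    rw [conjTranspose_kronecker, conjTranspose_one, walshHadamard_conjTranspose]
  have hUU : U * U = 1 := by
    rw [← mul_kronecker_mul, walshHadamard_mul_self, mul_one, one_kronecker_one]
  have hσ : (U * ρ * U).PosSemidef := by
    simpa only [hU] using hpsd.conjTranspose_mul_mul_same U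
  have hσtr : (U * ρ * U).trace = 1 := by
    rw [trace_mul_cycle, hUU, one_mul, htr]
  have hσblock : upperRight (U * ρ * U) = (γ : ℂ) • diagonal d := by
    rw [upperRight_one_kronecker_mul_mul, hblock, Matrix.mul_smul, Matrix.mul_smul,
      Matrix.smul_mul, Matrix.smul_mul, walshHadamard_mul_sum_Qx_mul_walshHadamard,
      ← diagonal_smul]
    rfl
  have hentry (β : BV n) : (U * ρ * U) (0, β) (1, β) = γ * d β := by
    simpa [upperRight] using congrFun (congrFun hσblock β) β
  calc γ * ∑ β, ‖d β‖ ≤ |γ| * ∑ β, ‖d β‖ := by gcongr; exact le_abs_self γ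
    _ = ∑ β, ‖(U * ρ * U) (0, β) (1, β)‖ := by
        simp only [hentry, norm_mul, Complex.norm_real, Real.norm_eq_abs, Finset.mul_sum]
    _ ≤ ∑ β, (RCLike.re ((U * ρ * U) (0, β) (0, β))
          + RCLike.re ((U * ρ * U) (1, β) (1, β))) / 2 :=
        Finset.sum_le_sum fun β _ => hσ.norm_apply_le _ _
    _ = RCLike.re (U * ρ * U).trace / 2 := by
        rw [trace_eq_sum_zmod_two_prod, map_sum, Finset.sum_div]
        simp only [map_add]
    _ = 1 / 2 := by rw [hσtr, RCLike.one_re]
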